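/- arXiv:1908.02177 — 4 statements merged into one kernel-verified Lean document; each statement's English description precedes it below -/
import Mathlib

section
/- If f : X → Y is an R-map and A ⊆ X is nearly compact relative to X, then the image f(A) is nearly compact relative to Y. -/
def IsRegOpen {X : Type*} [TopologicalSpace X] (A : Set X) : Prop :=
  A = interior (closure A)

/-- The preimage of every regular open set is regular open. -/
def IsRMap {X Y : Type*} [TopologicalSpace X] [TopologicalSpace Y] (f : X → Y) : Prop :=
  ∀ U : Set Y, IsRegOpen U → IsRegOpen (f ⁻¹' U)

/-- `A` is nearly compact relative to `X`: every cover of `A` by regular open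
subsets of `X` has a finite subcover of `A`. -/
def NearlyCompactRel {X : Type*} [TopologicalSpace X] (A : Set X) : Prop :=
  ∀ 𝒰 : Set (Set X), (∀ U ∈ 𝒰, IsRegOpen U) → A ⊆ ⋃₀ 𝒰 →
    ∃ F ⊆ 𝒰, F.Finite ∧ A ⊆ ⋃₀ F

theorem image_nearlyCompactRel {X Y : Type*} [TopologicalSpace X] [TopologicalSpace Y]
    (f : X → Y) (hf : IsRMap f) (A : Set X) (hA : NearlyCompactRel A) :
    NearlyCompactRel (f '' A) := by
  intro 𝒰 hreg hcov
  obtain ⟨F, hF, hFfin, hFcov⟩ := hA ((f ⁻¹' ·) '' 𝒰)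
    (by rintro _ ⟨U, hU, rfl⟩; exact hf U (hreg U hU))
    (by
      intro x hx
      obtain ⟨U, hU, hxU⟩ := hcov ⟨x, hx, rfl⟩
      exact ⟨f ⁻¹' U, ⟨U, hU, rfl⟩, hxU⟩)
  choose g hg1 hg2 using fun V (hV : V ∈ F) => hF hV
  refine ⟨(fun V : {V // V ∈ F} => g V V.2) '' Set.univ, ?_, ?_, ?_⟩
  · rintro _ ⟨V, -, rfl⟩; exact hg1 V V.2
  · exact (Set.finite_univ_iff.mpr (hFfin.to_subtype)).image _
  · rintro _ ⟨x, hx, rfl⟩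
    obtain ⟨V, hVF, hxV⟩ := hFcov hx
    refine ⟨g V hVF, ⟨⟨V, hVF⟩, trivial, rfl⟩, ?_⟩
    have := hg2 V hVF
    rw [← this] at hxV
    exact hxV
end

section
/- If X is a Hausdorff R-space and A ⊆ X is nearly compact relative to X, then the complement of A is regular open; equivalently, A is regular closed in X. -/
def IsRSpace (X : Type*) [TopologicalSpace X] : Prop :=
  ∀ S : Set (Set X), (∀ U ∈ S, IsRegOpen U) → IsRegOpen (⋃₀ S)

/-- A set is regular closed if its complement is regular open. -/
def IsRegClosed {X : Type*} [TopologicalSpace X] (A : Set X) : Prop :=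
  IsRegOpen Aᶜ

lemma isRegOpen_int_cl {X : Type*} [TopologicalSpace X] (U : Set X) (hU : IsOpen U) :
    IsRegOpen (interior (closure U)) := by
  unfold IsRegOpen
  have h1 : closure (interior (closure U)) = closure U :=
    subset_antisymm (closure_minimal interior_subset isClosed_closure)
      (closure_mono hU.subset_interior_closure)
  rw [h1]

lemma isRegOpen_compl_closure {X : Type*} [TopologicalSpace X] {W : Set X}
    (h : IsRegOpen W) : IsRegOpen (closure W)ᶜ := by
  unfold IsRegOpen
  rw [closure_compl, interior_compl, ← h]

lemma key {X : Type*} [TopologicalSpace X] [T2Space X]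
    (hR : IsRSpace X) (A : Set X) (hA : NearlyCompactRel A) {x : X} (hx : x ∉ A) :
    ∃ W : Set X, IsRegOpen W ∧ A ⊆ W ∧ x ∉ closure W := by
  set 𝒰 : Set (Set X) := {W | IsRegOpen W ∧ x ∉ closure W} with h𝒰
  have hcov : A ⊆ ⋃₀ 𝒰 := by
    intro a ha
    obtain ⟨U, V, hUo, hVo, haU, hxV, hUV⟩ := t2_separation (show a ≠ x from fun h => hx (h ▸ ha))
    have hVclU : Disjoint V (closure U) := hUV.symm.closure_right hVo
    refine ⟨interior (closure U), ⟨isRegOpen_int_cl U hUo, ?_⟩, hUo.subset_interior_closure haU⟩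
    rw [mem_closure_iff]
    push_neg
    exact ⟨V, hVo, hxV, by
      rw [← Set.not_nonempty_iff_eq_empty]
      intro ⟨y, hyV, hyW⟩
      exact (hVclU.ne_of_mem hyV (interior_subset hyW)) rfl⟩
  obtain ⟨F, hF𝒰, hFfin, hAF⟩ := hA 𝒰 (fun U hU => hU.1) hcov
  refine ⟨⋃₀ F, hR F (fun U hU => (hF𝒰 hU).1), hAF, ?_⟩
  rw [Set.sUnion_eq_biUnion, hFfin.closure_biUnion]
  simp only [Set.mem_iUnion]
  rintro ⟨U, hU, hxU⟩
  exact (hF𝒰 hU).2 hxU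

theorem nearlyCompactRel_regClosed {X : Type*} [TopologicalSpace X] [T2Space X]
    (hR : IsRSpace X) (A : Set X) (hA : NearlyCompactRel A) :
    IsRegOpen Aᶜ ∧ IsRegClosed A := by
  suffices h : IsRegOpen Aᶜ from ⟨h, h⟩
  choose! W hWreg hWsub hWcl using fun x (hx : x ∉ A) => key hR A hA hx
  have hS : ⋃₀ ((fun x => (closure (W x))ᶜ) '' Aᶜ) = Aᶜ := by
    ext y
    constructor
    · rintro ⟨_, ⟨x, hx, rfl⟩, hy⟩
      exact fun hyA => hy (subset_closure (hWsub x hx hyA))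
    · intro hy
      exact ⟨(closure (W y))ᶜ, ⟨y, hy, rfl⟩, hWcl y hy⟩
  have := hR ((fun x => (closure (W x))ᶜ) '' Aᶜ) (by
    rintro _ ⟨x, hx, rfl⟩
    exact isRegOpen_compl_closure (hWreg x hx))
  rwa [hS] at this
end

section
/- The product of two nearly compact topological spaces is nearly compact. -/
/-- A space is nearly compact if every cover by regular open sets has a finite subcover. -/
def NearlyCompact (X : Type*) [TopologicalSpace X] : Prop :=
  ∀ 𝒰 : Set (Set X), (∀ U ∈ 𝒰, IsRegOpen U) → ⋃₀ 𝒰 = Set.univ →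
    ∃ F ⊆ 𝒰, F.Finite ∧ ⋃₀ F = Set.univ

/-!
A space is nearly compact exactly when its semiregularization, the topology generated by the
regular open sets, is compact; the nontrivial direction is Alexander's subbasis theorem.
Since `interior ∘ closure` commutes with products, every regular open subset of `X × Y` is a
union of rectangles `interior (closure u) ×ˢ interior (closure v)` of regular open sets. Hence
the semiregularization of `X × Y` is coarser than the product of the semiregularizations, which
is compact by Tychonoff's theorem.
-/

open Set TopologicalSpace

theorem compactSpace_of_le {X : Type*} {t t' : TopologicalSpace X} (h : t ≤ t')
    (ht : @CompactSpace X t) : @CompactSpace X t' :=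
  @Function.Surjective.compactSpace X X t t' id (continuous_id_of_le h) ht Function.surjective_id

section

variable {X Y : Type*} [TopologicalSpace X] [TopologicalSpace Y]

theorem isRegOpen_interior_closure (A : Set X) : IsRegOpen (interior (closure A)) :=
  interior_closure_idem.symm

theorem IsRegOpen.exists_prod_subset {W : Set (X × Y)} (hW : IsRegOpen W) {p : X × Y}
    (hp : p ∈ W) : ∃ U V, IsRegOpen U ∧ IsRegOpen V ∧ p.1 ∈ U ∧ p.2 ∈ V ∧ U ×ˢ V ⊆ W := by
  have hWo : IsOpen W := hW ▸ isOpen_interior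
  obtain ⟨u, v, hu, hv, hpu, hpv, huv⟩ := isOpen_prod_iff.mp hWo p.1 p.2 hp
  refine ⟨interior (closure u), interior (closure v), isRegOpen_interior_closure u,
    isRegOpen_interior_closure v, interior_maximal subset_closure hu hpu,
    interior_maximal subset_closure hv hpv, ?_⟩
  calc interior (closure u) ×ˢ interior (closure v) = interior (closure (u ×ˢ v)) := by
        rw [closure_prod_eq, interior_prod_eq]
    _ ⊆ interior (closure W) := interior_mono (closure_mono huv)
    _ = W := hW.symm

variable (X) in
abbrev semiregularization : TopologicalSpace X :=
  generateFrom {U | IsRegOpen U}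

theorem nearlyCompact_iff_compactSpace_semiregularization :
    NearlyCompact X ↔ @CompactSpace X (semiregularization X) := by
  refine ⟨compactSpace_generateFrom (T := semiregularization X) rfl, fun h 𝒰 h𝒰 hcover => ?_⟩
  obtain ⟨F, hF𝒰, hF, hFcover⟩ := @IsCompact.elim_finite_subcover_image X (Set X)
    (semiregularization X) univ 𝒰 id (@isCompact_univ X (semiregularization X) h)
    (fun U hU => isOpen_generateFrom_of_mem (h𝒰 U hU)) (by simp [← sUnion_eq_biUnion, hcover])
  exact ⟨F, hF𝒰, hF, univ_subset_iff.mp (by simpa [← sUnion_eq_biUnion] using hFcover)⟩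

theorem prod_semiregularization_le_semiregularization_prod :
    @instTopologicalSpaceProd X Y (semiregularization X) (semiregularization Y) ≤
      semiregularization (X × Y) := by
  refine le_generateFrom fun W hW => ?_
  rw [@isOpen_prod_iff X Y (semiregularization X) (semiregularization Y)]
  intro a b hab
  obtain ⟨U, V, hU, hV, ha, hb, hUV⟩ := hW.exists_prod_subset hab
  exact ⟨U, V, isOpen_generateFrom_of_mem hU, isOpen_generateFrom_of_mem hV, ha, hb, hUV⟩

end

theorem nearlyCompact_prod {X Y : Type*} [TopologicalSpace X] [TopologicalSpace Y]
    (hX : NearlyCompact X) (hY : NearlyCompact Y) : NearlyCompact (X × Y) := by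
  rw [nearlyCompact_iff_compactSpace_semiregularization] at hX hY ⊢
  exact compactSpace_of_le prod_semiregularization_le_semiregularization_prod
    (@instCompactSpaceProd X Y (semiregularization X) (semiregularization Y) hX hY)
end

section
/- If X and Y are nearly compact spaces and W is a cover of X × Y by regular open sets, then there exist a finite cover U of X by regular open subsets of X and a finite cover V of Y by regular open subsets of Y such that the cover {U_i × V_j} refines into W, i.e., each U_i × V_j is contained in some element of W. -/
/-! For each `y : Y`, cover `X × {y}` by regular open boxes lying inside members of `𝒲`. Near
compactness of `X` leaves finitely many boxes `U_x × V_x`; their `X`-sides cover `X`, and the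
intersection of their `Y`-sides is a regular open tube around `y` that works for all of them at
once. Near compactness of `Y` leaves finitely many such tubes, and the common refinement (by
pairwise intersections) of the corresponding finite covers of `X` is the required cover of `X`. -/

open Set

section

variable {X Y ι : Type*} [TopologicalSpace X] [TopologicalSpace Y]

namespace IsRegOpen

theorem isOpen {A : Set X} (hA : IsRegOpen A) : IsOpen A :=
  hA ▸ isOpen_interior

theorem interior_closure_subset {A W : Set X} (hW : IsRegOpen W) (hAW : A ⊆ W) :
    interior (closure A) ⊆ W :=
  (interior_mono (closure_mono hAW)).trans hW.ge

theorem inter {A B : Set X} (hA : IsRegOpen A) (hB : IsRegOpen B) : IsRegOpen (A ∩ B) :=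
  subset_antisymm (hA.isOpen.inter hB.isOpen).subset_interior_closure
    (subset_inter (hA.interior_closure_subset inter_subset_left)
      (hB.interior_closure_subset inter_subset_right))

theorem exists_prod_subset_s6 {W : Set (X × Y)} (hW : IsRegOpen W) {p : X × Y} (hp : p ∈ W) :
    ∃ U V, IsRegOpen U ∧ IsRegOpen V ∧ p.1 ∈ U ∧ p.2 ∈ V ∧ U ×ˢ V ⊆ W := by
  obtain ⟨u, v, hu, hv, hpu, hpv, huv⟩ := isOpen_prod_iff.1 hW.isOpen p.1 p.2 hp
  refine ⟨interior (closure u), interior (closure v), interior_closure_idem.symm,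
    interior_closure_idem.symm, hu.subset_interior_closure hpu, hv.subset_interior_closure hpv, ?_⟩
  rw [← interior_prod_eq, ← closure_prod_eq]
  exact hW.interior_closure_subset huv

end IsRegOpen

theorem isRegOpen_univ : IsRegOpen (univ : Set X) := by
  simp [IsRegOpen]

theorem isRegOpen_biInter_finset (t : Finset ι) {U : ι → Set X}
    (hU : ∀ i ∈ t, IsRegOpen (U i)) : IsRegOpen (⋂ i ∈ t, U i) := by
  classical
  induction t using Finset.induction_on with
  | empty => simpa using isRegOpen_univ
  | insert i t _ ih =>
    rw [Finset.set_biInter_insert]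
    exact (hU i (t.mem_insert_self i)).inter (ih fun j hj => hU j (Finset.mem_insert_of_mem hj))

structure IsFiniteRegOpenCover (𝒰 : Set (Set X)) : Prop where
  finite : 𝒰.Finite
  isRegOpen : ∀ U ∈ 𝒰, IsRegOpen U
  sUnion_eq : ⋃₀ 𝒰 = univ

def Refines {α : Type*} (𝒜 𝒲 : Set (Set α)) : Prop :=
  ∀ A ∈ 𝒜, ∃ W ∈ 𝒲, A ⊆ W

theorem Refines.trans {α : Type*} {𝒜 ℬ 𝒞 : Set (Set α)} (h𝒜 : Refines 𝒜 ℬ)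
    (hℬ : Refines ℬ 𝒞) : Refines 𝒜 𝒞 := fun A hA =>
  let ⟨B, hB, hAB⟩ := h𝒜 A hA
  let ⟨C, hC, hBC⟩ := hℬ B hB
  ⟨C, hC, hAB.trans hBC⟩

theorem refines_image2_inter_left {α : Type*} (𝒜 ℬ : Set (Set α)) :
    Refines (image2 (· ∩ ·) 𝒜 ℬ) 𝒜 := by
  rintro _ ⟨A, hA, B, -, rfl⟩
  exact ⟨A, hA, inter_subset_left⟩

theorem refines_image2_inter_right {α : Type*} (𝒜 ℬ : Set (Set α)) :
    Refines (image2 (· ∩ ·) 𝒜 ℬ) ℬ := by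
  rintro _ ⟨-, -, B, hB, rfl⟩
  exact ⟨B, hB, inter_subset_right⟩

namespace IsFiniteRegOpenCover

theorem singleton_univ : IsFiniteRegOpenCover ({univ} : Set (Set X)) :=
  ⟨finite_singleton _, fun _ hU => hU ▸ isRegOpen_univ, sUnion_singleton _⟩

theorem image2_inter {𝒰 𝒱 : Set (Set X)} (h𝒰 : IsFiniteRegOpenCover 𝒰)
    (h𝒱 : IsFiniteRegOpenCover 𝒱) : IsFiniteRegOpenCover (image2 (· ∩ ·) 𝒰 𝒱) where
  finite := h𝒰.finite.image2 _ h𝒱.finite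
  isRegOpen := by
    rintro _ ⟨U, hU, V, hV, rfl⟩
    exact (h𝒰.isRegOpen U hU).inter (h𝒱.isRegOpen V hV)
  sUnion_eq := by
    refine eq_univ_of_forall fun x => ?_
    obtain ⟨U, hU, hxU⟩ := mem_sUnion.1 (h𝒰.sUnion_eq ▸ mem_univ x)
    obtain ⟨V, hV, hxV⟩ := mem_sUnion.1 (h𝒱.sUnion_eq ▸ mem_univ x)
    exact ⟨U ∩ V, mem_image2_of_mem hU hV, hxU, hxV⟩

theorem exists_common_refinement (t : Finset ι) (𝒢 : ι → Set (Set X))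
    (h𝒢 : ∀ i ∈ t, IsFiniteRegOpenCover (𝒢 i)) :
    ∃ 𝒰, IsFiniteRegOpenCover 𝒰 ∧ ∀ i ∈ t, Refines 𝒰 (𝒢 i) := by
  classical
  induction t using Finset.induction_on with
  | empty => exact ⟨{univ}, singleton_univ, by simp⟩
  | insert i t _ ih =>
    obtain ⟨𝒰, h𝒰, h𝒰ref⟩ := ih fun j hj => h𝒢 j (Finset.mem_insert_of_mem hj)
    refine ⟨image2 (· ∩ ·) 𝒰 (𝒢 i), h𝒰.image2_inter (h𝒢 i (t.mem_insert_self i)), ?_⟩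
    simp only [Finset.forall_mem_insert]
    exact ⟨refines_image2_inter_right _ _,
      fun j hj => (refines_image2_inter_left _ _).trans (h𝒰ref j hj)⟩

end IsFiniteRegOpenCover

theorem NearlyCompact.elim_finite_subcover (hX : NearlyCompact X) (U : ι → Set X)
    (hU : ∀ i, IsRegOpen (U i)) (hcov : ∀ x, ∃ i, x ∈ U i) :
    ∃ t : Finset ι, IsFiniteRegOpenCover (U '' t) := by
  obtain ⟨t, -, ht, htU⟩ := exists_subset_image_finite_and.1 <|
    hX (U '' univ) (forall_mem_image.2 fun i _ => hU i)
      (eq_univ_of_forall fun x => let ⟨i, hi⟩ := hcov x; ⟨U i, mem_image_of_mem U trivial, hi⟩)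
  lift t to Finset ι using ht
  exact ⟨t, t.finite_toSet.image U, forall_mem_image.2 fun i _ => hU i, htU⟩

theorem NearlyCompact.exists_tube (hX : NearlyCompact X) {𝒲 : Set (Set (X × Y))}
    (h𝒲reg : ∀ W ∈ 𝒲, IsRegOpen W) (h𝒲cov : ⋃₀ 𝒲 = univ) (y : Y) :
    ∃ V, IsRegOpen V ∧ y ∈ V ∧ ∃ 𝒢, IsFiniteRegOpenCover 𝒢 ∧ ∀ U ∈ 𝒢, ∃ W ∈ 𝒲, U ×ˢ V ⊆ W := by
  have box (x : X) : ∃ U V, IsRegOpen U ∧ IsRegOpen V ∧ x ∈ U ∧ y ∈ V ∧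
      ∃ W ∈ 𝒲, U ×ˢ V ⊆ W := by
    obtain ⟨W, hW, hxy⟩ := mem_sUnion.1 (h𝒲cov ▸ mem_univ (x, y))
    obtain ⟨U, V, hU, hV, hxU, hyV, hUV⟩ := (h𝒲reg W hW).exists_prod_subset_s6 hxy
    exact ⟨U, V, hU, hV, hxU, hyV, W, hW, hUV⟩
  choose U V hU hV hxU hyV hUVW using box
  obtain ⟨t, ht⟩ := hX.elim_finite_subcover U hU fun x => ⟨x, hxU x⟩
  refine ⟨⋂ x ∈ t, V x, isRegOpen_biInter_finset t fun x _ => hV x,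
    mem_iInter₂.2 fun x _ => hyV x, U '' t, ht, ?_⟩
  rintro _ ⟨x, hx, rfl⟩
  obtain ⟨W, hW, hUVW⟩ := hUVW x
  exact ⟨W, hW, (prod_mono subset_rfl (biInter_subset_of_mem hx)).trans hUVW⟩

end

theorem prod_cover_refinement {X Y : Type*} [TopologicalSpace X] [TopologicalSpace Y]
    (hX : NearlyCompact X) (hY : NearlyCompact Y)
    (𝒲 : Set (Set (X × Y))) (h𝒲reg : ∀ W ∈ 𝒲, IsRegOpen W) (h𝒲cov : ⋃₀ 𝒲 = Set.univ) :
    ∃ 𝒰 : Set (Set X), ∃ 𝒱 : Set (Set Y),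
      𝒰.Finite ∧ (∀ U ∈ 𝒰, IsRegOpen U) ∧ ⋃₀ 𝒰 = Set.univ ∧
      𝒱.Finite ∧ (∀ V ∈ 𝒱, IsRegOpen V) ∧ ⋃₀ 𝒱 = Set.univ ∧
      ∀ U ∈ 𝒰, ∀ V ∈ 𝒱, ∃ W ∈ 𝒲, U ×ˢ V ⊆ W := by
  choose V hV hyV 𝒢 h𝒢 h𝒢W using hX.exists_tube h𝒲reg h𝒲cov
  obtain ⟨T, h𝒱⟩ := hY.elim_finite_subcover V hV fun y => ⟨y, hyV y⟩
  obtain ⟨𝒰, h𝒰, h𝒰ref⟩ :=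
    IsFiniteRegOpenCover.exists_common_refinement T 𝒢 fun y _ => h𝒢 y
  refine ⟨𝒰, V '' T, h𝒰.finite, h𝒰.isRegOpen, h𝒰.sUnion_eq, h𝒱.finite, h𝒱.isRegOpen,
    h𝒱.sUnion_eq, ?_⟩
  rintro U hU _ ⟨y, hy, rfl⟩
  obtain ⟨G, hG, hUG⟩ := h𝒰ref y hy U hU
  obtain ⟨W, hW, hGW⟩ := h𝒢W y G hG
  exact ⟨W, hW, (prod_mono hUG subset_rfl).trans hGW⟩
end
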